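/- arXiv:1006.1208 — 2 statements merged into one kernel-verified Lean document; each statement's English description precedes it below -/
import Mathlib

section
/- Let L be a finite-dimensional Lie algebra over a field F with d(L) = dim_F L, and let A be a maximal abelian subalgebra of L containing [L,L]. Then for every x ∈ L, the adjoint action ad(x) restricted to A is multiplication by a scalar in F. -/
/-- The minimal number of generators of a Lie algebra `L` over `R`. -/
noncomputable def lieD (R L : Type*) [CommRing R] [LieRing L] [LieAlgebra R L] : ℕ :=
  sInf {n | ∃ s : Finset L, s.card = n ∧ LieSubalgebra.lieSpan R L ↑s = ⊤}

/-!
If `⁅x, a⁆ ∉ span {x, a}`, choose a hyperplane `H` containing `x` and `a` but not `⁅x, a⁆`;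
then `H + F ⁅x, a⁆ = L`, so a basis of `H` generates `L` and `d(L) < dim L`. Hence, when
`d(L) = dim L`, every bracket `⁅x, a⁆` lies in `span {x, a}`. For `a ∈ A` and `x ∉ A`, the
coefficient of `x` must vanish since `⁅x, a⁆, a ∈ A`; for `x ∈ A` the bracket is zero. So every
`a ∈ A` is an eigenvector of `ad x`, and an endomorphism all of whose vectors are eigenvectors
is a homothety.
-/

open Module Submodule

theorem LinearMap.exists_forall_mem_eq_smul_of_forall_mem_span_singleton
    {K V : Type*} [Field K] [AddCommGroup V] [Module K V] {f : V →ₗ[K] V} {p : Submodule K V}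
    (h : ∀ v ∈ p, f v ∈ K ∙ v) : ∃ c : K, ∀ v ∈ p, f v = c • v := by
  let g : p →ₗ[K] p := f.restrict fun v hv ↦ (span_singleton_le_iff_mem v p).mpr hv (h v hv)
  have hg : ∀ v : p, ¬ LinearIndependent K ![v, g v] := by
    intro v hv
    obtain ⟨c, hc⟩ := mem_span_singleton.mp (h v v.2)
    have := LinearIndependent.pair_iff.mp hv c (-1) (by ext; simp [g, hc])
    simp at this
  obtain ⟨c, hc⟩ := g.exists_eq_smul_id_of_forall_notLinearIndependent hg
  exact ⟨c, fun v hv ↦ congrArg Subtype.val (LinearMap.congr_fun hc ⟨v, hv⟩)⟩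

section lieD

variable {F L : Type*} [Field F] [LieRing L] [LieAlgebra F L] [FiniteDimensional F L]

theorem lieD_le_finrank_of_lieSpan_eq_top {V : Submodule F L}
    (hV : LieSubalgebra.lieSpan F L (V : Set L) = ⊤) : lieD F L ≤ finrank F V := by
  classical
  let b := finBasis F V
  let s : Finset L := Finset.univ.image fun i ↦ (b i : L)
  have hVs : V ≤ span F (s : Set L) := by
    have : (s : Set L) = V.subtype '' Set.range b := by
      simp only [s, Finset.coe_image, Finset.coe_univ, Set.image_univ]
      exact Set.range_comp _ _
    rw [this, span_image, b.span_eq, Submodule.map_top, range_subtype]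
  have hs : LieSubalgebra.lieSpan F L (s : Set L) = ⊤ := by
    rw [eq_top_iff, ← hV, LieSubalgebra.lieSpan_le]
    exact fun v hv ↦ LieSubalgebra.submodule_span_le_lieSpan (hVs hv)
  calc lieD F L ≤ s.card := Nat.sInf_le ⟨s, rfl, hs⟩
    _ ≤ Finset.univ.card := Finset.card_image_le
    _ = finrank F V := by simp

theorem eq_top_of_lieSpan_eq_top_of_lieD_eq_finrank (h : lieD F L = finrank F L)
    {V : Submodule F L} (hV : LieSubalgebra.lieSpan F L (V : Set L) = ⊤) : V = ⊤ := by
  by_contra hne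
  have := lieD_le_finrank_of_lieSpan_eq_top hV
  have := Submodule.finrank_lt hne
  omega

theorem lie_mem_span_pair_of_lieD_eq_finrank (h : lieD F L = finrank F L) (x a : L) :
    ⁅x, a⁆ ∈ span F {x, a} := by
  by_contra hz
  obtain ⟨f, hfz, hf⟩ := exists_dual_map_eq_bot_of_notMem hz inferInstance
  have hker : span F {x, a} ≤ LinearMap.ker f := LinearMap.le_ker_iff_map.mpr hf
  set S := LieSubalgebra.lieSpan F L (LinearMap.ker f : Set L)
  have hkerS : LinearMap.ker f ≤ S.toSubmodule := LieSubalgebra.subset_lieSpan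
  have hmem : ∀ y ∈ ({x, a} : Set L), y ∈ S := fun y hy ↦ hkerS (hker (subset_span hy))
  have hzS : ⁅x, a⁆ ∈ S := S.lie_mem (hmem x (by simp)) (hmem a (by simp))
  have hS : S = ⊤ := by
    rw [eq_top_iff, ← LieSubalgebra.toSubmodule_le_toSubmodule, LieSubalgebra.top_toSubmodule,
      ← f.span_singleton_sup_ker_eq_top hfz]
    exact sup_le (span_le.mpr (by simpa using hzS)) hkerS
  have hker_top : LinearMap.ker f = ⊤ := eq_top_of_lieSpan_eq_top_of_lieD_eq_finrank h hS
  exact hfz (hker_top ▸ mem_top : ⁅x, a⁆ ∈ LinearMap.ker f)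

end lieD

theorem stmt_3_general (F L : Type*) [Field F] [LieRing L] [LieAlgebra F L]
    [FiniteDimensional F L] (h : lieD F L = Module.finrank F L)
    (A : LieSubalgebra F L) (hab : IsLieAbelian A)
    (hder : ∀ x y : L, ⁅x, y⁆ ∈ A) :
    ∀ x : L, ∃ c : F, ∀ a ∈ A, ⁅x, a⁆ = c • a := by
  intro x
  suffices ∀ a ∈ A, ⁅x, a⁆ ∈ F ∙ a from
    LinearMap.exists_forall_mem_eq_smul_of_forall_mem_span_singleton
      (f := LieAlgebra.ad F L x) (p := A.toSubmodule) this
  intro a ha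
  by_cases hx : x ∈ A
  · have : ⁅(⟨x, hx⟩ : A), (⟨a, ha⟩ : A)⁆ = 0 := trivial_lie_zero _ _ _ _
    rw [show ⁅x, a⁆ = 0 from congrArg Subtype.val this]
    exact zero_mem _
  obtain ⟨α, β, hαβ⟩ := mem_span_pair.mp (lie_mem_span_pair_of_lieD_eq_finrank h x a)
  have hα : α = 0 := by
    by_contra hα
    refine hx ((A.smul_mem_iff hα).mp ?_)
    rw [eq_sub_of_add_eq hαβ]
    exact A.sub_mem (hder x a) (A.smul_mem β ha)
  rw [← hαβ, hα, zero_smul, zero_add]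
  exact smul_mem _ _ (mem_span_singleton_self a)

/-- Let `L` be a finite-dimensional Lie algebra over a field `F` with `d(L) = dim_F L`, and
let `A` be a maximal abelian Lie subalgebra of `L` containing `[L,L]`.  Then for every
`x ∈ L` the adjoint action of `x` on `A` is multiplication by a scalar in `F`. -/
theorem stmt_3 (F L : Type*) [Field F] [LieRing L] [LieAlgebra F L]
    [FiniteDimensional F L] (h : lieD F L = Module.finrank F L)
    (A : LieSubalgebra F L) (hab : IsLieAbelian A)
    (hder : ∀ x y : L, ⁅x, y⁆ ∈ A)
    (hmax : ∀ B : LieSubalgebra F L, IsLieAbelian B → A ≤ B → B = A) :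
    ∀ x : L, ∃ c : F, ∀ a ∈ A, ⁅x, a⁆ = c • a :=
  stmt_3_general F L h A hab hder
end

section
/- Let L be a Lie algebra over ℤ_p that is free of finite rank d as a ℤ_p-module, and suppose the ℚ_p-Lie algebra ℚ_p ⊗_{ℤ_p} L has minimal number of generators equal to d. Then either L is abelian, or L = ℤ_p·x ⊕ A where A ≅ ℤ_p^{d-1} is an abelian ideal of L and ad(x) acts on A as multiplication by p^s for some nonnegative integer s. -/
/-
If `⁅u, v⁆ ∉ span {u, v}` in `ℚ_p ⊗ L`, then `u, v, ⁅u, v⁆` extend to a basis from which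
`⁅u, v⁆` can be dropped, so `ℚ_p ⊗ L` would need fewer than `d` generators. Hence every plane is
a subalgebra; then `ad u` is a scalar `F u` on the quotient by `ℚ_p u`, and `F` is a linear form
with `⁅u, v⁆ = F u • v - F v • u`. On the lattice `F` is `ℤ_p`-valued: `ad x` multiplies a
nonzero bracket `a ∈ L` by `F x`, so if `‖F x‖ > 1` then `a` would be divisible by all powers of
`(F x)⁻¹`. So `F (L)` is an ideal `p ^ s ℤ_p`, and an `x` with `F x = p ^ s` together with
`A = ker F` gives the decomposition.
-/

open scoped TensorProduct

open Module Submodule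

lemma lieD_le_card {R L : Type*} [CommRing R] [LieRing L] [LieAlgebra R L] {s : Finset L}
    (hs : LieSubalgebra.lieSpan R L s = ⊤) : lieD R L ≤ s.card :=
  Nat.sInf_le ⟨s, rfl, hs⟩

lemma TensorProduct.mk_one_injective_of_flat {R A M : Type*} [CommRing R] [CommRing A]
    [Algebra R A] [AddCommGroup M] [Module R M] [Module.Flat R M]
    (hA : Function.Injective (algebraMap R A)) :
    Function.Injective (TensorProduct.mk R A M 1) := by
  have : TensorProduct.mk R A M 1 =
      (Algebra.linearMap R A).rTensor M ∘ₗ (TensorProduct.lid R M).symm.toLinearMap := by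
    ext; simp
  rw [this]
  exact (Module.Flat.rTensor_preserves_injective_linearMap (M := M) _ hA).comp
    (TensorProduct.lid R M).symm.injective

lemma eq_of_sub_smul_mem_of_notMem {K V : Type*} [Field K] [AddCommGroup V] [Module K V]
    {S : Submodule K V} {x v : V} (hv : v ∉ S) {c c' : K} (hc : x - c • v ∈ S)
    (hc' : x - c' • v ∈ S) : c = c' := by
  by_contra hne
  have : (c' - c) • v ∈ S := by
    simpa [sub_smul] using S.sub_mem hc hc'
  exact hv ((S.smul_mem_iff (sub_ne_zero.mpr (Ne.symm hne))).mp this)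

section Domain

variable {R M : Type*} [CommRing R] [IsDomain R] [AddCommGroup M] [Module R M]

lemma LinearMap.isCompl_span_singleton_ker {g : M →ₗ[R] R} {x : M} (hgx : g x ≠ 0)
    (hrange : LinearMap.range g = R ∙ g x) : IsCompl (R ∙ x) (LinearMap.ker g) := by
  constructor
  · refine disjoint_def.mpr fun z hz hzg => ?_
    obtain ⟨t, rfl⟩ := mem_span_singleton.mp hz
    rw [LinearMap.mem_ker, map_smul, smul_eq_mul, mul_eq_zero] at hzg
    rw [hzg.resolve_right hgx, zero_smul]
  · refine codisjoint_iff.mpr (eq_top_iff'.mpr fun z => ?_)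
    obtain ⟨t, ht⟩ := mem_span_singleton.mp (hrange ▸ LinearMap.mem_range_self g z)
    refine mem_sup.mpr
      ⟨t • x, smul_mem _ _ (mem_span_singleton_self x), z - t • x, ?_, by abel⟩
    rw [LinearMap.mem_ker, map_sub, map_smul, ht, sub_self]

lemma finrank_eq_finrank_add_one_of_isCompl_span_singleton [Module.Finite R M]
    [IsTorsionFree R M] {x : M} (hx : x ≠ 0) {N : Submodule R M} (h : IsCompl (R ∙ x) N) :
    finrank R M = finrank R N + 1 := by
  rw [← N.finrank_quotient_add_finrank, (quotientEquivOfIsCompl N _ h.symm).finrank_eq,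
    ← (LinearEquiv.toSpanNonzeroSingleton R M x hx).finrank_eq, finrank_self, add_comm]

end Domain

section LinearForm

variable {R L : Type*} [CommRing R] [LieRing L] [LieAlgebra R L] {g : L →ₗ[R] R}

lemma apply_lie_eq_zero_of_lie_eq (hg : ∀ x y : L, ⁅x, y⁆ = g x • y - g y • x) (x y : L) :
    g ⁅x, y⁆ = 0 := by
  rw [hg, map_sub, map_smul, map_smul, smul_eq_mul, smul_eq_mul, mul_comm, sub_self]

def kerLieIdeal (hg : ∀ x y : L, ⁅x, y⁆ = g x • y - g y • x) : LieIdeal R L :=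
  { LinearMap.ker g with lie_mem := fun {x m} _ => apply_lie_eq_zero_of_lie_eq hg x m }

lemma lie_eq_smul_of_mem_kerLieIdeal (hg : ∀ x y : L, ⁅x, y⁆ = g x • y - g y • x) {a : L}
    (ha : a ∈ kerLieIdeal hg) (x : L) : ⁅x, a⁆ = g x • a := by
  rw [hg, show g a = 0 from ha, zero_smul, sub_zero]

lemma isLieAbelian_kerLieIdeal (hg : ∀ x y : L, ⁅x, y⁆ = g x • y - g y • x) :
    IsLieAbelian (kerLieIdeal hg) :=
  ⟨fun a b => Subtype.ext <| by
    simp [lie_eq_smul_of_mem_kerLieIdeal hg b.2, show g a = 0 from a.2]⟩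

end LinearForm

section OverField

variable {K V : Type*} [Field K] [LieRing V] [LieAlgebra K V]

lemma lieD_lt_finrank_of_lie_notMem_span [FiniteDimensional K V] {u v : V}
    (h : ⁅u, v⁆ ∉ span K {u, v}) : lieD K V < finrank K V := by
  classical
  set w := ⁅u, v⁆
  have hu : u ≠ 0 := by rintro rfl; simp [w] at h
  have huv : LinearIndepOn K id {u, v} :=
    linearIndepOn_id_pair hu fun a ha => h (by simp [w, ← ha])
  have hind : LinearIndepOn K id (insert w {u, v}) := huv.id_insert h
  set T := hind.extend (Set.subset_univ _)
  have hwuv : insert w {u, v} ⊆ T := hind.subset_extend _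
  have hT : T.Finite := Set.toFinite T
  set E := hT.toFinset.erase w
  have hE : ∀ x ∈ T, x ≠ w → x ∈ LieSubalgebra.lieSpan K V (E : Set V) := fun x hx hxw =>
    LieSubalgebra.subset_lieSpan (by simp [E, hx, hxw])
  have hTE : T ⊆ LieSubalgebra.lieSpan K V (E : Set V) := by
    intro x hx
    by_cases hxw : x = w
    · rw [hxw]
      refine LieSubalgebra.lie_mem _ (hE u (hwuv (by simp)) ?_) (hE v (hwuv (by simp)) ?_)
      · intro huw; exact h (by rw [← huw]; exact subset_span (by simp))
      · intro hvw; exact h (by rw [← hvw]; exact subset_span (by simp))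
    · exact hE x hx hxw
  have hgen : LieSubalgebra.lieSpan K V (E : Set V) = ⊤ := by
    rw [eq_top_iff]
    intro x _
    have hspan : span K T = ⊤ := by rw [hind.span_extend_eq_span, span_univ]
    exact (span_le (p := (LieSubalgebra.lieSpan K V (E : Set V)).toSubmodule)).mpr hTE
      (hspan ▸ mem_top)
  calc lieD K V ≤ E.card := lieD_le_card hgen
    _ < hT.toFinset.card := Finset.card_erase_lt_of_mem (by simpa using hwuv (by simp))
    _ = finrank K V := by
      rw [finrank_eq_nat_card_basis (Basis.extend hind), Nat.card_coe_set_eq,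
        Set.ncard_eq_toFinset_card T hT]

lemma lie_mem_span_pair_of_lieD_eq_finrank_s4 [FiniteDimensional K V]
    (h : lieD K V = finrank K V) (u v : V) : ⁅u, v⁆ ∈ span K {u, v} := by
  by_contra hw
  exact (lieD_lt_finrank_of_lie_notMem_span hw).ne h

lemma exists_lie_sub_smul_mem_span_singleton (H : ∀ u v : V, ⁅u, v⁆ ∈ span K {u, v})
    (u : V) : ∃ c : K, ∀ v, ⁅u, v⁆ - c • v ∈ K ∙ u := by
  have hle : K ∙ u ≤ (K ∙ u).comap (LieAlgebra.ad K V u : V →ₗ[K] V) :=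
    span_le.mpr (by simp)
  set T := (K ∙ u).mapQ (K ∙ u) _ hle
  obtain ⟨c, hc⟩ : ∃ c : K, T = c • 1 := by
    refine T.exists_eq_smul_id_of_forall_notLinearIndependent fun w hw => ?_
    obtain ⟨v, rfl⟩ := Submodule.Quotient.mk_surjective _ w
    obtain ⟨a, b, hab⟩ := mem_span_pair.mp (H u v)
    have hT : T (Submodule.Quotient.mk v) = b • Submodule.Quotient.mk v := by
      simp [T, ← hab, (Submodule.Quotient.mk_eq_zero _).mpr (mem_span_singleton_self u)]
    simpa using LinearIndependent.pair_iff.mp hw b (-1) (by simp [hT])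
  refine ⟨c, fun v => ?_⟩
  simpa only [T, mapQ_apply, LinearMap.smul_apply, Module.End.one_apply, ← Quotient.mk_smul,
    Submodule.Quotient.eq, LieAlgebra.ad_apply] using
    LinearMap.congr_fun hc (Submodule.Quotient.mk v)

theorem exists_linearMap_lie_eq_smul_sub_smul (H : ∀ u v : V, ⁅u, v⁆ ∈ span K {u, v}) :
    ∃ F : V →ₗ[K] K, ∀ u v, ⁅u, v⁆ = F u • v - F v • u := by
  by_cases hcyc : ∃ u : V, ∀ v, v ∈ K ∙ u
  · obtain ⟨u, hu⟩ := hcyc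
    refine ⟨0, fun x y => ?_⟩
    obtain ⟨a, rfl⟩ := mem_span_singleton.mp (hu x)
    obtain ⟨b, rfl⟩ := mem_span_singleton.mp (hu y)
    simp
  push Not at hcyc
  choose c hc using exists_lie_sub_smul_mem_span_singleton H
  have hc_unique (u : V) (c' : K) (h' : ∀ v, ⁅u, v⁆ - c' • v ∈ K ∙ u) : c' = c u :=
    let ⟨v, hv⟩ := hcyc u
    eq_of_sub_smul_mem_of_notMem hv (h' v) (hc u v)
  have hc_smul (t : K) (u : V) : c (t • u) = t * c u := by
    refine (hc_unique _ _ fun v => ?_).symm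
    obtain ⟨a, ha⟩ := mem_span_singleton.mp (hc u v)
    refine mem_span_singleton.mpr ⟨a, ?_⟩
    rw [smul_comm, ha, smul_lie, mul_smul, smul_sub]
  have hc_lie (u v : V) : ⁅u, v⁆ = c u • v - c v • u := by
    by_cases hv : v ∈ K ∙ u
    · obtain ⟨t, rfl⟩ := mem_span_singleton.mp hv
      simp [hc_smul, smul_smul, mul_comm]
    have hv0 : v ≠ 0 := by rintro rfl; exact hv (zero_mem _)
    have hu : ⁅u, v⁆ - c u • v + c v • u ∈ K ∙ u :=
      add_mem (hc u v) (smul_mem _ _ (mem_span_singleton_self u))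
    have hv' : ⁅u, v⁆ - c u • v + c v • u ∈ K ∙ v := by
      convert neg_mem (add_mem (hc v u) (smul_mem _ (c u) (mem_span_singleton_self v))) using 1
      rw [← lie_skew]
      abel
    have hzero := (disjoint_span_singleton' hv0).mpr hv |>.le_bot ⟨hu, hv'⟩
    linear_combination (norm := module) (mem_bot K).mp hzero
  have hc_add (u w : V) : c (u + w) = c u + c w := by
    obtain ⟨v, hv⟩ := hcyc 0
    have hv0 : v ≠ 0 := by rintro rfl; exact hv (zero_mem _)
    have h := add_lie u w v
    rw [hc_lie, hc_lie u, hc_lie w] at h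
    have : (c (u + w) - (c u + c w)) • v = 0 := by linear_combination (norm := module) h
    exact sub_eq_zero.mp ((smul_eq_zero.mp this).resolve_right hv0)
  exact ⟨⟨⟨c, hc_add⟩, hc_smul⟩, hc_lie⟩

end OverField

namespace PadicInt

variable {p : ℕ} [Fact p.Prime]

lemma norm_le_one_of_forall_pow_smul_mem_range {L M : Type*} [AddCommGroup L] [Module ℤ_[p] L]
    [Module.Finite ℤ_[p] L] [AddCommGroup M] [Module ℚ_[p] M] [Module ℤ_[p] M]
    [IsScalarTower ℤ_[p] ℚ_[p] M] {j : L →ₗ[ℤ_[p]] M} (hj : Function.Injective j) {a : L}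
    (ha : a ≠ 0) {c : ℚ_[p]} (hc : ∀ n : ℕ, c ^ n • j a ∈ LinearMap.range j) :
    ‖c‖ ≤ 1 := by
  by_contra! hc1
  have hc0 : c ≠ 0 := norm_pos_iff.mp (one_pos.trans hc1)
  have hnorm : ‖c⁻¹‖ < 1 := by rw [norm_inv]; exact inv_lt_one_of_one_lt₀ hc1
  set t : ℤ_[p] := ⟨c⁻¹, hnorm.le⟩
  have ht : t ∈ IsLocalRing.maximalIdeal ℤ_[p] :=
    (IsLocalRing.mem_maximalIdeal _).mpr (mem_nonunits.mpr hnorm)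
  -- `a` is divisible by every power of `t = c⁻¹`, so it vanishes by Krull's intersection theorem
  have hdiv : a ∈ ⨅ n : ℕ, IsLocalRing.maximalIdeal ℤ_[p] ^ n • (⊤ : Submodule ℤ_[p] L) := by
    refine mem_iInf _ |>.mpr fun n => ?_
    obtain ⟨y, hy⟩ := hc n
    have : a = t ^ n • y := hj <| by
      have htc : algebraMap ℤ_[p] ℚ_[p] t = c⁻¹ := rfl
      rw [map_smul, hy, ← algebraMap_smul ℚ_[p], smul_smul, map_pow, htc, ← mul_pow,
        inv_mul_cancel₀ hc0, one_pow, one_smul]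
    exact this ▸ smul_mem_smul (Ideal.pow_mem_pow ht n) mem_top
  rw [Ideal.iInf_pow_smul_eq_bot_of_isLocalRing _ (Ideal.IsMaximal.ne_top inferInstance)] at hdiv
  exact ha ((mem_bot _).mp hdiv)

theorem exists_linearMap_lie_eq_smul_sub_smul_of_baseChange {L : Type*} [LieRing L]
    [LieAlgebra ℤ_[p] L] [Module.Free ℤ_[p] L] [Module.Finite ℤ_[p] L] (hL : ¬ IsLieAbelian L)
    {F : ℚ_[p] ⊗[ℤ_[p]] L →ₗ[ℚ_[p]] ℚ_[p]} (hF : ∀ u v, ⁅u, v⁆ = F u • v - F v • u) :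
    ∃ g : L →ₗ[ℤ_[p]] ℤ_[p], ∀ x y : L, ⁅x, y⁆ = g x • y - g y • x := by
  set j := TensorProduct.mk ℤ_[p] ℚ_[p] L 1
  have hj : Function.Injective j := TensorProduct.mk_one_injective_of_flat Subtype.val_injective
  have hj_lie (x y : L) : j ⁅x, y⁆ = ⁅j x, j y⁆ := by
    simp [j, LieAlgebra.ExtendScalars.bracket_tmul]
  obtain ⟨a, ha, hFa⟩ : ∃ a : L, a ≠ 0 ∧ F (j a) = 0 := by
    obtain ⟨u, v, huv⟩ : ∃ u v : L, ⁅u, v⁆ ≠ 0 := by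
      by_contra! h
      exact hL ⟨h⟩
    exact ⟨⁅u, v⁆, huv, by rw [hj_lie]; exact apply_lie_eq_zero_of_lie_eq hF _ _⟩
  have hbound (x : L) : ‖F (j x)‖ ≤ 1 := by
    -- `ad x` acts on `a` as multiplication by `F x`
    refine norm_le_one_of_forall_pow_smul_mem_range hj ha fun n => ?_
    induction n with
    | zero => exact ⟨a, by simp⟩
    | succ n ih =>
      obtain ⟨y, hy⟩ := ih
      refine ⟨⁅x, y⁆, ?_⟩
      rw [hj_lie, hF, hy, map_smul, hFa, smul_zero, zero_smul, sub_zero, smul_smul, pow_succ']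
  let g : L →ₗ[ℤ_[p]] ℤ_[p] :=
    { toFun x := ⟨F (j x), hbound x⟩
      map_add' x y := Subtype.ext <| show F (j (x + y)) = F (j x) + F (j y) by simp
      map_smul' t x := Subtype.ext <| show F (j (t • x)) = t * F (j x) by
        rw [map_smul, ← algebraMap_smul ℚ_[p] t, map_smul]; rfl }
  refine ⟨g, fun x y => hj ?_⟩
  rw [hj_lie, hF, map_sub, map_smul, map_smul, ← algebraMap_smul ℚ_[p] (g x),
    ← algebraMap_smul ℚ_[p] (g y)]
  rfl

end PadicInt

/-- Let `L` be a `ℤₚ`-Lie lattice of rank `d` such that the `ℚₚ`-Lie algebra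
`ℚₚ ⊗ L` has minimal number of generators `d`.  Then either `L` is abelian, or
`L = ℤₚ·x ⊕ A` with `A ≅ ℤₚ^{d-1}` an abelian ideal and `ad x` acting on `A` as
multiplication by `p^s` for some `s ∈ ℕ`. -/
theorem stmt_4 (p : ℕ) [Fact p.Prime] (L : Type*) [LieRing L] [LieAlgebra ℤ_[p] L]
    [Module.Free ℤ_[p] L] [Module.Finite ℤ_[p] L] (d : ℕ)
    (hd : Module.finrank ℤ_[p] L = d)
    (h : lieD ℚ_[p] (ℚ_[p] ⊗[ℤ_[p]] L) = d) :
    IsLieAbelian L ∨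
      ∃ (x : L) (A : LieIdeal ℤ_[p] L) (s : ℕ), IsLieAbelian A ∧
        Module.Free ℤ_[p] A ∧ Module.finrank ℤ_[p] A = d - 1 ∧
        Submodule.span ℤ_[p] {x} ⊓ A.toSubmodule = ⊥ ∧
        Submodule.span ℤ_[p] {x} ⊔ A.toSubmodule = ⊤ ∧
        ∀ a ∈ A, ⁅x, a⁆ = (p : ℤ_[p]) ^ s • a := by
  by_cases hab : IsLieAbelian L
  · exact Or.inl hab
  have hlieD :
      lieD ℚ_[p] (ℚ_[p] ⊗[ℤ_[p]] L) = finrank ℚ_[p] (ℚ_[p] ⊗[ℤ_[p]] L) := by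
    rw [h, finrank_baseChange, hd]
  obtain ⟨F, hF⟩ :=
    exists_linearMap_lie_eq_smul_sub_smul (lie_mem_span_pair_of_lieD_eq_finrank_s4 hlieD)
  obtain ⟨g, hg⟩ := PadicInt.exists_linearMap_lie_eq_smul_sub_smul_of_baseChange hab hF
  have hg0 : LinearMap.range g ≠ ⊥ := by
    intro h0
    exact hab ⟨fun x y => by simp [hg x y, LinearMap.range_eq_bot.mp h0]⟩
  obtain ⟨s, hs⟩ := PadicInt.ideal_eq_span_pow_p hg0
  obtain ⟨x, hx⟩ : (p : ℤ_[p]) ^ s ∈ LinearMap.range g :=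
    hs ▸ Ideal.mem_span_singleton_self _
  have hps : (p : ℤ_[p]) ^ s ≠ 0 := pow_ne_zero _ PadicInt.irreducible_p.ne_zero
  have hcompl : IsCompl (ℤ_[p] ∙ x) (LinearMap.ker g) :=
    LinearMap.isCompl_span_singleton_ker (hx ▸ hps) (hx ▸ hs)
  have hrank := finrank_eq_finrank_add_one_of_isCompl_span_singleton
    (fun hx0 => hps (by rw [← hx, hx0, map_zero])) hcompl
  refine Or.inr ⟨x, kerLieIdeal hg, s, isLieAbelian_kerLieIdeal hg, inferInstance, ?_,
    hcompl.inf_eq_bot, hcompl.sup_eq_top,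
    fun a ha => hx ▸ lie_eq_smul_of_mem_kerLieIdeal hg ha x⟩
  change finrank ℤ_[p] (LinearMap.ker g) = d - 1
  omega
end
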